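/- Let (B_i)_{i≥1} be i.i.d. square-integrable positive-integer-valued random variables and (D_n)_{n≥1} i.i.d. geometrically distributed random variables with parameter q ∈ (0,1) on {1,2,3,...}, with the two sequences independent of each other. Partition the index set {1,2,3,...} into consecutive blocks, block i having length B_i, and for the ℓ-th symbol of block i define its tarry time as the sum of the D_n's with indices strictly after that symbol's index and within block i. Then, almost surely, the limit of (total tarry time of the first m blocks) / (Σ_{i=1}^{m} B_i) as m → ∞ exists and equals (E[B₁²] − E[B₁]) / (2q E[B₁]). -/

import Mathlib

/-!
Write `N i = ∑_{j<i} B j`. The `j`-th inter-arrival time `D (N i + 1 + j)` of block `i` is waited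
through by the `j` symbols of the block that precede it, so the total tarry time of the block is
`T i = ∑_{j < B i} j * D (N i + 1 + j)`. Because the `D n` are i.i.d. and independent of `B`, the
sequence `(D (N + 1 + j))_j` has the same product law for every offset `N`, and blocks occupying
disjoint index ranges are independent. Conditioning on the block sizes (Fubini for the independent
pair `B`, `D`) therefore shows that the law of `T i` depends only on the law of `B i` and that
`T i`, `T j` are independent for `i ≠ j`. So `T` is i.i.d. with mean `E[B₁² - B₁] / (2q)`, and the
claim is the quotient of the strong laws of large numbers for `T` and for `B`.
-/

open MeasureTheory ProbabilityTheory Finset Filter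

open scoped ENNReal Topology

def blockTarry (b : ℕ) (e : ℕ → ℕ) : ℕ := ∑ j ∈ range b, j * e j

def tarry (i : ℕ) (β d : ℕ → ℕ) : ℕ :=
  blockTarry (β i) (fun j => d (∑ k ∈ range i, β k + 1 + j))

lemma sum_Icc_sum_Icc_eq_blockTarry (b ν : ℕ) (d : ℕ → ℕ) :
    ∑ ℓ ∈ Icc 1 b, ∑ n ∈ Icc (ℓ + 1) b, d (ν + n) = blockTarry b (fun j => d (ν + 1 + j)) := by
  induction b with
  | zero => simp [blockTarry]
  | succ b ih =>
    rw [blockTarry, sum_range_succ, ← blockTarry, ← ih, sum_Icc_succ_top (Nat.le_add_left 1 b),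
      Icc_eq_empty_of_lt (Nat.lt_succ_self _), sum_empty, add_zero]
    have h : ∀ ℓ ∈ Icc 1 b, ∑ n ∈ Icc (ℓ + 1) (b + 1), d (ν + n)
        = ∑ n ∈ Icc (ℓ + 1) b, d (ν + n) + d (ν + 1 + b) := fun ℓ hℓ => by
      rw [sum_Icc_succ_top (by simp at hℓ; omega), add_assoc ν 1 b, add_comm 1 b]
    rw [sum_congr rfl h, sum_add_distrib, sum_const, Nat.card_Icc, smul_eq_mul,
      Nat.add_sub_cancel]

lemma cast_tarry_eq_sum_Icc (i : ℕ) (β d : ℕ → ℕ) :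
    (tarry i β d : ℝ)
      = ∑ ℓ ∈ Icc 1 (β i), ∑ n ∈ Icc (ℓ + 1) (β i), (d (∑ j ∈ range i, β j + n) : ℝ) := by
  rw [tarry, ← sum_Icc_sum_Icc_eq_blockTarry]
  push_cast
  rfl

lemma measurable_blockTarry (b : ℕ) : Measurable (blockTarry b) :=
  Finset.measurable_sum _ fun j _ => (measurable_pi_apply j).const_mul _

lemma measurable_tarry (i : ℕ) : Measurable (fun p : (ℕ → ℕ) × (ℕ → ℕ) => tarry i p.1 p.2) := by
  have hblock : Measurable (fun p : (ℕ × ℕ) × (ℕ → ℕ) =>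
      blockTarry p.1.1 (fun j => p.2 (p.1.2 + 1 + j))) :=
    measurable_from_prod_countable_right fun c => (measurable_blockTarry c.1).comp
      (measurable_pi_lambda _ fun j => measurable_pi_apply (c.2 + 1 + j))
  have hN : Measurable (fun p : (ℕ → ℕ) × (ℕ → ℕ) => ∑ k ∈ range i, p.1 k) := by fun_prop
  exact hblock.comp ((((measurable_pi_apply i).comp measurable_fst).prodMk hN).prodMk measurable_snd)

lemma blockTarry_congr {b : ℕ} {e e' : ℕ → ℕ} (h : ∀ j < b, e j = e' j) :
    blockTarry b e = blockTarry b e' :=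
  sum_congr rfl fun j hj => by rw [h j (mem_range.1 hj)]

lemma exists_blockTarry_eq_comp_restrict (b ν : ℕ) :
    ∃ r : (Ioc ν (ν + b) → ℕ) → ℕ, ∀ d : ℕ → ℕ,
      blockTarry b (fun j => d (ν + 1 + j)) = r (fun i => d i) :=
  ⟨fun u => blockTarry b fun j => if h : ν + 1 + j ∈ Ioc ν (ν + b) then u ⟨_, h⟩ else 0,
    fun d => blockTarry_congr fun j hj => by rw [dif_pos (by simp; omega)]⟩

lemma sum_range_add_le_sum_range {β : ℕ → ℕ} {i j : ℕ} (hij : i < j) :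
    ∑ k ∈ range i, β k + β i ≤ ∑ k ∈ range j, β k := by
  rw [← sum_range_succ]
  exact sum_le_sum_of_subset (range_subset_range.2 hij)

lemma hasSum_mean_geometric {q : ℝ} (hq : q ∈ Set.Ioo (0 : ℝ) 1) :
    HasSum (fun k : ℕ => k * (q * (1 - q) ^ (k - 1))) (1 / q) := by
  obtain ⟨hq0, hq1⟩ := hq
  have hr : ‖1 - q‖ < 1 := by rw [Real.norm_eq_abs, abs_lt]; constructor <;> linarith
  have hr0 : 1 - q ≠ 0 := by linarith
  have hterm : (fun k : ℕ => k * (q * (1 - q) ^ (k - 1)))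
      = fun k : ℕ => q / (1 - q) * (k * (1 - q) ^ k) := by
    funext k
    cases k with
    | zero => simp
    | succ k => rw [Nat.add_sub_cancel, pow_succ]; field_simp
  rw [hterm, show 1 / q = q / (1 - q) * ((1 - q) / (1 - (1 - q)) ^ 2) by
    rw [sub_sub_cancel]; field_simp]
  exact (hasSum_coe_mul_geometric_of_norm_lt_one hr).mul_left _

lemma MeasureTheory.Measure.ext_of_singleton_succ {ν ν' : Measure ℕ} [IsFiniteMeasure ν]
    (huniv : ν Set.univ = ν' Set.univ) (h : ∀ k, ν {k + 1} = ν' {k + 1}) : ν = ν' := by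
  have hcompl : ∀ ρ : Measure ℕ, ρ {0}ᶜ = ∑' k, ρ {k + 1} := fun ρ => by
    rw [show ({0}ᶜ : Set ℕ) = ⋃ k, {k + 1} by ext n; cases n <;> simp,
      measure_iUnion (fun i j hij => Set.disjoint_singleton.2 (by simpa using hij))
        fun _ => measurableSet_singleton _]
  refine Measure.ext_of_singleton fun k => ?_
  cases k with
  | succ k => exact h k
  | zero =>
    have hc : ν {0}ᶜ = ν' {0}ᶜ := by rw [hcompl, hcompl, tsum_congr h]
    refine (ENNReal.add_left_inj (measure_ne_top ν {0}ᶜ)).1 ?_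
    rw [measure_add_measure_compl (measurableSet_singleton 0), hc,
      measure_add_measure_compl (measurableSet_singleton 0), huniv]

section
variable {Ω : Type*} [MeasurableSpace Ω] {μ : Measure Ω} {q : ℝ} {X Y : Ω → ℕ}

lemma lintegral_eq_of_geometric (hq : q ∈ Set.Ioo (0 : ℝ) 1) (hX : Measurable X)
    (hgeom : ∀ k, 1 ≤ k → μ {ω | X ω = k} = ENNReal.ofReal (q * (1 - q) ^ (k - 1))) :
    ∫⁻ ω, (X ω : ℝ≥0∞) ∂μ = ENNReal.ofReal (1 / q) := by
  have hterm : ∀ k : ℕ,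
      (k : ℝ≥0∞) * μ.map X {k} = ENNReal.ofReal (k * (q * (1 - q) ^ (k - 1))) := by
    intro k
    rcases k.eq_zero_or_pos with rfl | hk
    · simp
    · rw [Measure.map_apply hX (measurableSet_singleton _), ENNReal.ofReal_mul (Nat.cast_nonneg _),
        ENNReal.ofReal_natCast]
      exact congr_arg _ (hgeom k hk)
  have hsum := hasSum_mean_geometric hq
  rw [← lintegral_map (measurable_of_countable _) hX, lintegral_countable', tsum_congr hterm,
    ← ENNReal.ofReal_tsum_of_nonneg (fun k => by have := hq.1; have := hq.2.le; positivity)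
      hsum.summable, hsum.tsum_eq]

lemma identDistrib_of_geometric [IsProbabilityMeasure μ] (hX : Measurable X) (hY : Measurable Y)
    (hXg : ∀ k, 1 ≤ k → μ {ω | X ω = k} = ENNReal.ofReal (q * (1 - q) ^ (k - 1)))
    (hYg : ∀ k, 1 ≤ k → μ {ω | Y ω = k} = ENNReal.ofReal (q * (1 - q) ^ (k - 1))) :
    IdentDistrib X Y μ μ where
  aemeasurable_fst := hX.aemeasurable
  aemeasurable_snd := hY.aemeasurable
  map_eq := by
    have : IsProbabilityMeasure (μ.map X) := Measure.isProbabilityMeasure_map hX.aemeasurable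
    refine Measure.ext_of_singleton_succ ?_ fun k => ?_
    · simp [Measure.map_apply, hY]
    · rw [Measure.map_apply hX (measurableSet_singleton _),
        Measure.map_apply hY (measurableSet_singleton _)]
      exact (hXg _ k.succ_pos).trans (hYg _ k.succ_pos).symm

lemma integrable_and_integral_eq_of_lintegral_eq {f g : Ω → ℝ} (hf : AEStronglyMeasurable f μ)
    (hf0 : 0 ≤ᵐ[μ] f) (hg : Integrable g μ) (hg0 : 0 ≤ᵐ[μ] g)
    (h : ∫⁻ ω, ENNReal.ofReal (f ω) ∂μ = ∫⁻ ω, ENNReal.ofReal (g ω) ∂μ) :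
    Integrable f μ ∧ ∫ ω, f ω ∂μ = ∫ ω, g ω ∂μ := by
  refine ⟨⟨hf, (hasFiniteIntegral_iff_ofReal hf0).2 ?_⟩, ?_⟩
  · exact h ▸ (hasFiniteIntegral_iff_ofReal hg0).1 hg.2
  · rw [integral_eq_lintegral_of_nonneg_ae hf0 hf, integral_eq_lintegral_of_nonneg_ae hg0 hg.1, h]

end

lemma Nat.cast_sum_range_id (b : ℕ) : ((∑ j ∈ range b, j : ℕ) : ℝ) = ((b : ℝ) ^ 2 - b) / 2 := by
  induction b with
  | zero => simp
  | succ b ih => rw [sum_range_succ, Nat.cast_add, ih]; push_cast; ring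

lemma tendsto_sum_div_sum_of_tendsto_avg {a b : ℕ → ℝ} {α β : ℝ}
    (ha : Tendsto (fun n : ℕ => (∑ i ∈ range n, a i) / n) atTop (𝓝 α))
    (hb : Tendsto (fun n : ℕ => (∑ i ∈ range n, b i) / n) atTop (𝓝 β)) (hβ : β ≠ 0) :
    Tendsto (fun n => (∑ i ∈ range n, a i) / ∑ i ∈ range n, b i) atTop (𝓝 (α / β)) :=
  (ha.div hb hβ).congr' <| (eventually_ne_atTop 0).mono fun _ hn =>
    div_div_div_cancel_right₀ (Nat.cast_ne_zero.2 hn) _ _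

namespace ProbabilityTheory
variable {Ω α β : Type*} [MeasurableSpace Ω] {μ : Measure Ω} [IsFiniteMeasure μ]
  [MeasurableSpace α] [MeasurableSpace β] {X : Ω → α} {Y : Ω → β}

theorem IndepFun.lintegral_comp_eq_lintegral_lintegral (hXY : IndepFun X Y μ)
    (hX : Measurable X) (hY : Measurable Y) {f : α × β → ℝ≥0∞} (hf : Measurable f) :
    ∫⁻ ω, f (X ω, Y ω) ∂μ = ∫⁻ ω, ∫⁻ ω', f (X ω, Y ω') ∂μ ∂μ := by
  rw [← lintegral_map hf (hX.prodMk hY),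
    (indepFun_iff_map_prod_eq_prod_map_map hX.aemeasurable hY.aemeasurable).1 hXY,
    lintegral_prod _ hf.aemeasurable, lintegral_map hf.lintegral_prod_right' hX]
  exact lintegral_congr fun ω => lintegral_map (hf.comp measurable_prodMk_left) hY

theorem IndepFun.measure_preimage_eq_lintegral (hXY : IndepFun X Y μ)
    (hX : Measurable X) (hY : Measurable Y) {s : Set (α × β)} (hs : MeasurableSet s) :
    μ {ω | (X ω, Y ω) ∈ s} = ∫⁻ ω, μ {ω' | (X ω, Y ω') ∈ s} ∂μ := by
  have hind : ∀ (Z : Ω → α × β), Measurable Z →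
      ∫⁻ ω, s.indicator 1 (Z ω) ∂μ = μ {ω | Z ω ∈ s} := fun Z hZ => by
    simp_rw [← Set.indicator_comp_right (g := 1) Z, Pi.one_comp]
    exact lintegral_indicator_one (hZ hs)
  rw [← hind (fun ω => (X ω, Y ω)) (hX.prodMk hY),
    hXY.lintegral_comp_eq_lintegral_lintegral hX hY (measurable_one.indicator hs)]
  exact lintegral_congr fun ω => hind _ (measurable_const.prodMk hY)

end ProbabilityTheory

theorem ProbabilityTheory.iIndepFun.map_comp_eq_infinitePi {Ω ι κ γ : Type*}
    [MeasurableSpace Ω] [MeasurableSpace γ] {μ : Measure Ω} {D : ι → Ω → γ} (hD : iIndepFun D μ) (hDmeas : ∀ n, Measurable (D n)) {g : κ → ι}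
    (hg : Function.Injective g) {ν : Measure γ} (hlaw : ∀ j, μ.map (D (g j)) = ν) :
    μ.map (fun ω j => D (g j) ω) = Measure.infinitePi fun _ : κ => ν := by
  rw [(hD.precomp hg).map_fun_eq_infinitePi_map₀
    (measurable_pi_lambda _ fun j => hDmeas (g j)).aemeasurable]
  simp only [hlaw]

section
variable {Ω : Type*} [MeasurableSpace Ω] {μ : Measure Ω} {D : ℕ → Ω → ℕ}

lemma identDistrib_shift (hDmeas : ∀ n, Measurable (D n)) (hDindep : iIndepFun D μ)
    (hDident : ∀ n, IdentDistrib (D (n + 1)) (D 1) μ μ) (ν : ℕ) :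
    IdentDistrib (fun ω j => D (ν + 1 + j) ω) (fun ω j => D (j + 1) ω) μ μ where
  aemeasurable_fst := (measurable_pi_lambda _ fun j => hDmeas _).aemeasurable
  aemeasurable_snd := (measurable_pi_lambda _ fun j => hDmeas _).aemeasurable
  map_eq := by
    rw [hDindep.map_comp_eq_infinitePi hDmeas (g := fun j => ν + 1 + j)
        (add_right_injective _) (fun j => by rw [add_right_comm]; exact (hDident _).map_eq),
      hDindep.map_comp_eq_infinitePi hDmeas (g := fun j => j + 1)
        (add_left_injective 1) (fun j => (hDident j).map_eq)]

lemma indepFun_blockTarry_of_le (hDmeas : ∀ n, Measurable (D n)) (hDindep : iIndepFun D μ)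
    {b b' ν ν' : ℕ} (h : ν + b ≤ ν') :
    IndepFun (fun ω => blockTarry b fun j => D (ν + 1 + j) ω)
      (fun ω => blockTarry b' fun j => D (ν' + 1 + j) ω) μ := by
  obtain ⟨r, hr⟩ := exists_blockTarry_eq_comp_restrict b ν
  obtain ⟨r', hr'⟩ := exists_blockTarry_eq_comp_restrict b' ν'
  have hdisj : Disjoint (Ioc ν (ν + b)) (Ioc ν' (ν' + b')) :=
    disjoint_left.2 fun n hn hn' => by simp only [mem_Ioc] at hn hn'; omega
  rw [show (fun ω => blockTarry b fun j => D (ν + 1 + j) ω) = fun ω => r fun i => D i ω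
      from funext fun ω => hr fun n => D n ω,
    show (fun ω => blockTarry b' fun j => D (ν' + 1 + j) ω) = fun ω => r' fun i => D i ω
      from funext fun ω => hr' fun n => D n ω]
  exact (hDindep.indepFun_finset _ _ hdisj hDmeas).comp (measurable_of_countable r)
    (measurable_of_countable r')

lemma measure_tarry_mem_eq (hDmeas : ∀ n, Measurable (D n)) (hDindep : iIndepFun D μ)
    (hDident : ∀ n, IdentDistrib (D (n + 1)) (D 1) μ μ) (i : ℕ) (β : ℕ → ℕ) (S : Set ℕ) :
    μ {ω | tarry i β (fun n => D n ω) ∈ S}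
      = μ {ω | blockTarry (β i) (fun j => D (j + 1) ω) ∈ S} :=
  ((identDistrib_shift hDmeas hDindep hDident _).comp (measurable_blockTarry (β i))).measure_mem_eq
    .of_discrete

lemma indepFun_tarry_of_lt (hDmeas : ∀ n, Measurable (D n)) (hDindep : iIndepFun D μ)
    (β : ℕ → ℕ) {i j : ℕ} (hij : i < j) :
    IndepFun (fun ω => tarry i β fun n => D n ω) (fun ω => tarry j β fun n => D n ω) μ :=
  indepFun_blockTarry_of_le hDmeas hDindep (sum_range_add_le_sum_range hij)

lemma lintegral_blockTarry (hDmeas : ∀ n, Measurable (D n)) {m : ℝ≥0∞}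
    (hmean : ∀ n, ∫⁻ ω, (D (n + 1) ω : ℝ≥0∞) ∂μ = m) (b ν : ℕ) :
    ∫⁻ ω, (blockTarry b (fun j => D (ν + 1 + j) ω) : ℝ≥0∞) ∂μ = (∑ j ∈ range b, j : ℕ) * m := by
  have hmeas : ∀ n, Measurable fun ω => (D n ω : ℝ≥0∞) := fun n => by fun_prop
  push_cast [blockTarry]
  rw [lintegral_finsetSum _ fun j _ => (hmeas _).const_mul _, sum_mul]
  refine sum_congr rfl fun j _ => ?_
  rw [lintegral_const_mul _ (hmeas _), add_right_comm, hmean]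

end

section
variable {Ω : Type*} [MeasurableSpace Ω] {μ : Measure Ω} [IsProbabilityMeasure μ]
  {B D : ℕ → Ω → ℕ}

lemma measurable_tarry_comp (hBmeas : ∀ i, Measurable (B i)) (hDmeas : ∀ n, Measurable (D n))
    (i : ℕ) : Measurable (fun ω => tarry i (fun k => B k ω) fun n => D n ω) :=
  (measurable_tarry i).comp ((measurable_pi_lambda _ hBmeas).prodMk (measurable_pi_lambda _ hDmeas))

lemma measure_tarry_mem (hBmeas : ∀ i, Measurable (B i)) (hDmeas : ∀ n, Measurable (D n))
    (hDindep : iIndepFun D μ) (hDident : ∀ n, IdentDistrib (D (n + 1)) (D 1) μ μ)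
    (hBD : IndepFun (fun ω i => B i ω) (fun ω n => D n ω) μ) (i : ℕ) (S : Set ℕ) :
    μ {ω | tarry i (fun k => B k ω) (fun n => D n ω) ∈ S}
      = ∫⁻ ω, μ {ω' | blockTarry (B i ω) (fun j => D (j + 1) ω') ∈ S} ∂μ :=
  (hBD.measure_preimage_eq_lintegral (measurable_pi_lambda _ hBmeas)
    (measurable_pi_lambda _ hDmeas) (s := {p | tarry i p.1 p.2 ∈ S})
    (measurable_tarry i .of_discrete)).trans
    (lintegral_congr fun _ => measure_tarry_mem_eq hDmeas hDindep hDident i _ S)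

lemma identDistrib_tarry (hBmeas : ∀ i, Measurable (B i)) (hDmeas : ∀ n, Measurable (D n))
    (hBident : ∀ i, IdentDistrib (B i) (B 0) μ μ)
    (hDindep : iIndepFun D μ) (hDident : ∀ n, IdentDistrib (D (n + 1)) (D 1) μ μ)
    (hBD : IndepFun (fun ω i => B i ω) (fun ω n => D n ω) μ) (i : ℕ) :
    IdentDistrib (fun ω => tarry i (fun k => B k ω) fun n => D n ω)
      (fun ω => tarry 0 (fun k => B k ω) fun n => D n ω) μ μ where
  aemeasurable_fst := (measurable_tarry_comp hBmeas hDmeas i).aemeasurable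
  aemeasurable_snd := (measurable_tarry_comp hBmeas hDmeas 0).aemeasurable
  map_eq := Measure.ext fun S hS => by
    rw [Measure.map_apply (measurable_tarry_comp hBmeas hDmeas i) hS,
      Measure.map_apply (measurable_tarry_comp hBmeas hDmeas 0) hS]
    exact (measure_tarry_mem hBmeas hDmeas hDindep hDident hBD i S).trans
      ((((hBident i).comp (measurable_of_countable
          fun b => μ {ω' | blockTarry b (fun j => D (j + 1) ω') ∈ S})).lintegral_eq).trans
        (measure_tarry_mem hBmeas hDmeas hDindep hDident hBD 0 S).symm)

lemma indepFun_tarry (hBmeas : ∀ i, Measurable (B i)) (hDmeas : ∀ n, Measurable (D n))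
    (hBindep : iIndepFun B μ)
    (hDindep : iIndepFun D μ) (hDident : ∀ n, IdentDistrib (D (n + 1)) (D 1) μ μ)
    (hBD : IndepFun (fun ω i => B i ω) (fun ω n => D n ω) μ) {i j : ℕ} (hij : i < j) :
    IndepFun (fun ω => tarry i (fun k => B k ω) fun n => D n ω)
      (fun ω => tarry j (fun k => B k ω) fun n => D n ω) μ := by
  rw [indepFun_iff_measure_inter_preimage_eq_mul]
  intro S S' _ _
  set g : Set ℕ → ℕ → ℝ≥0∞ := fun S b => μ {ω' | blockTarry b (fun j => D (j + 1) ω') ∈ S}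
  calc μ ({ω | tarry i (fun k => B k ω) (fun n => D n ω) ∈ S}
        ∩ {ω | tarry j (fun k => B k ω) (fun n => D n ω) ∈ S'})
      = ∫⁻ ω, μ ({ω' | tarry i (fun k => B k ω) (fun n => D n ω') ∈ S}
          ∩ {ω' | tarry j (fun k => B k ω) (fun n => D n ω') ∈ S'}) ∂μ :=
        hBD.measure_preimage_eq_lintegral (measurable_pi_lambda _ hBmeas)
          (measurable_pi_lambda _ hDmeas)
          (s := {p | tarry i p.1 p.2 ∈ S} ∩ {p | tarry j p.1 p.2 ∈ S'})
          ((measurable_tarry i .of_discrete).inter (measurable_tarry j .of_discrete))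
    _ = ∫⁻ ω, g S (B i ω) * g S' (B j ω) ∂μ := lintegral_congr fun ω =>
        ((indepFun_tarry_of_lt hDmeas hDindep _ hij).measure_inter_preimage_eq_mul _ _
          .of_discrete .of_discrete).trans
        (congr_arg₂ (· * ·) (measure_tarry_mem_eq hDmeas hDindep hDident i _ S)
          (measure_tarry_mem_eq hDmeas hDindep hDident j _ S'))
    _ = (∫⁻ ω, g S (B i ω) ∂μ) * ∫⁻ ω, g S' (B j ω) ∂μ :=
        lintegral_mul_eq_lintegral_mul_lintegral_of_indepFun
          ((measurable_of_countable (g S)).comp (hBmeas i))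
          ((measurable_of_countable (g S')).comp (hBmeas j))
          ((hBindep.indepFun hij.ne).comp (measurable_of_countable (g S))
            (measurable_of_countable (g S')))
    _ = _ := (congr_arg₂ (· * ·) (measure_tarry_mem hBmeas hDmeas hDindep hDident hBD i S)
          (measure_tarry_mem hBmeas hDmeas hDindep hDident hBD j S')).symm

lemma lintegral_tarry (hBmeas : ∀ i, Measurable (B i)) (hDmeas : ∀ n, Measurable (D n))
    (hBD : IndepFun (fun ω i => B i ω) (fun ω n => D n ω) μ) {m : ℝ≥0∞}
    (hmean : ∀ n, ∫⁻ ω, (D (n + 1) ω : ℝ≥0∞) ∂μ = m) (i : ℕ) :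
    ∫⁻ ω, (tarry i (fun k => B k ω) (fun n => D n ω) : ℝ≥0∞) ∂μ
      = ∫⁻ ω, (∑ j ∈ range (B i ω), j : ℕ) * m ∂μ :=
  (hBD.lintegral_comp_eq_lintegral_lintegral (measurable_pi_lambda _ hBmeas)
    (measurable_pi_lambda _ hDmeas)
    ((measurable_of_countable (fun k : ℕ => (k : ℝ≥0∞))).comp (measurable_tarry i))).trans
    (lintegral_congr fun ω => lintegral_blockTarry hDmeas hmean (B i ω) (∑ k ∈ range i, B k ω))

lemma integrable_tarry_zero_and_integral_eq {q : ℝ} (hq : q ∈ Set.Ioo (0 : ℝ) 1)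
    (hBmeas : ∀ i, Measurable (B i)) (hDmeas : ∀ n, Measurable (D n))
    (hBsq : MemLp (fun ω => (B 0 ω : ℝ)) 2 μ)
    (hgeom : ∀ n, 1 ≤ n → ∀ k, 1 ≤ k →
      μ {ω | D n ω = k} = ENNReal.ofReal (q * (1 - q) ^ (k - 1)))
    (hBD : IndepFun (fun ω i => B i ω) (fun ω n => D n ω) μ) :
    Integrable (fun ω => (tarry 0 (fun k => B k ω) (fun n => D n ω) : ℝ)) μ ∧
      μ[fun ω => (tarry 0 (fun k => B k ω) (fun n => D n ω) : ℝ)]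
        = (μ[fun ω => (B 0 ω : ℝ) ^ 2] - μ[fun ω => (B 0 ω : ℝ)]) / (2 * q) := by
  have hB1 : Integrable (fun ω => (B 0 ω : ℝ)) μ := hBsq.integrable one_le_two
  have hB2 : Integrable (fun ω => (B 0 ω : ℝ) ^ 2) μ := hBsq.integrable_sq
  have hg0 : ∀ b : ℕ, 0 ≤ ((b : ℝ) ^ 2 - b) / (2 * q) := fun b => by
    rw [← div_div, ← Nat.cast_sum_range_id]; have := hq.1; positivity
  have hlin : ∫⁻ ω, ENNReal.ofReal (tarry 0 (fun k => B k ω) (fun n => D n ω) : ℝ) ∂μ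
      = ∫⁻ ω, ENNReal.ofReal (((B 0 ω : ℝ) ^ 2 - B 0 ω) / (2 * q)) ∂μ := by
    simp_rw [ENNReal.ofReal_natCast]
    rw [lintegral_tarry hBmeas hDmeas hBD
      (fun n => lintegral_eq_of_geometric hq (hDmeas _) (hgeom _ n.succ_pos)) 0]
    refine lintegral_congr fun ω => ?_
    rw [← ENNReal.ofReal_natCast, ← ENNReal.ofReal_mul (Nat.cast_nonneg _), Nat.cast_sum_range_id]
    congr 1
    ring
  obtain ⟨hint, heq⟩ := integrable_and_integral_eq_of_lintegral_eq
    (g := fun ω => ((B 0 ω : ℝ) ^ 2 - B 0 ω) / (2 * q))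
    ((measurable_of_countable _).comp (measurable_tarry_comp hBmeas hDmeas 0)).aestronglyMeasurable
    (ae_of_all _ fun _ => Nat.cast_nonneg _) ((hB2.sub hB1).div_const _)
    (ae_of_all _ fun _ => hg0 _) hlin
  exact ⟨hint, heq.trans (by rw [integral_div, integral_sub hB2 hB1])⟩

end

/-- Blocks are indexed from `0`: block `i` holds the symbols `N i + 1, …, N i + B i` with
`N i = ∑_{j<i} B j`, and `B 0` plays the role of `B₁`. -/
theorem v2f_tarry_time_lln
    {Ω : Type*} [MeasurableSpace Ω] {μ : Measure Ω} [IsProbabilityMeasure μ]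
    (q : ℝ) (hq : q ∈ Set.Ioo (0 : ℝ) 1)
    (B : ℕ → Ω → ℕ) (D : ℕ → Ω → ℕ)
    (hBmeas : ∀ i, Measurable (B i)) (hDmeas : ∀ n, Measurable (D n))
    (hBindep : iIndepFun B μ)
    (hBident : ∀ i, IdentDistrib (B i) (B 0) μ μ)
    (hBpos : ∀ i ω, 1 ≤ B i ω)
    (hBsq : MemLp (fun ω => (B 0 ω : ℝ)) 2 μ)
    (hDindep : iIndepFun D μ)
    (hgeom : ∀ n, 1 ≤ n → ∀ k, 1 ≤ k →
      μ {ω | D n ω = k} = ENNReal.ofReal (q * (1 - q) ^ (k - 1)))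
    (hBD : IndepFun (fun ω i => B i ω) (fun ω n => D n ω) μ) :
    ∀ᵐ ω ∂μ, Tendsto
      (fun m => (∑ i ∈ Finset.range m, ∑ ℓ ∈ Finset.Icc 1 (B i ω),
          ∑ n ∈ Finset.Icc (ℓ + 1) (B i ω),
            (D ((∑ j ∈ Finset.range i, B j ω) + n) ω : ℝ)) /
        (∑ i ∈ Finset.range m, (B i ω : ℝ)))
      atTop
      (nhds ((μ[fun ω => ((B 0 ω : ℝ)) ^ 2] - μ[fun ω => (B 0 ω : ℝ)]) /
        (2 * q * μ[fun ω => (B 0 ω : ℝ)]))) := by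
  have hcast : Measurable (fun k : ℕ => (k : ℝ)) := measurable_of_countable _
  have hDident : ∀ n, IdentDistrib (D (n + 1)) (D 1) μ μ := fun n =>
    identDistrib_of_geometric (hDmeas _) (hDmeas _) (hgeom _ n.succ_pos) (hgeom 1 le_rfl)
  set T : ℕ → Ω → ℝ := fun i ω => tarry i (fun k => B k ω) (fun n => D n ω)
  obtain ⟨hTint, hTmean⟩ := integrable_tarry_zero_and_integral_eq hq hBmeas hDmeas hBsq hgeom hBD
  have hTlln := strong_law_ae_real T hTint
    (fun i j hij => by
      rcases hij.lt_or_gt with h | h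
      · exact (indepFun_tarry hBmeas hDmeas hBindep hDindep hDident hBD h).comp hcast hcast
      · exact ((indepFun_tarry hBmeas hDmeas hBindep hDindep hDident hBD h).comp hcast hcast).symm)
    fun i => (identDistrib_tarry hBmeas hDmeas hBident hDindep hDident hBD i).comp hcast
  have hBlln := strong_law_ae_real (fun i ω => (B i ω : ℝ)) (hBsq.integrable one_le_two)
    (fun i j hij => (hBindep.indepFun hij).comp hcast hcast) fun i => (hBident i).comp hcast
  have hEB : μ[fun ω => (B 0 ω : ℝ)] ≠ 0 := by
    refine (zero_lt_one.trans_le ?_).ne'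
    simpa using integral_mono (integrable_const 1) (hBsq.integrable one_le_two)
      fun ω => (Nat.one_le_cast.2 (hBpos 0 ω) : (1 : ℝ) ≤ B 0 ω)
  filter_upwards [hTlln, hBlln] with ω hTω hBω
  have hlim := tendsto_sum_div_sum_of_tendsto_avg hTω hBω hEB
  rw [hTmean, div_div] at hlim
  refine hlim.congr fun m => congrArg (· / _) (sum_congr rfl fun i _ => ?_)
  exact cast_tarry_eq_sum_Icc i (fun k => B k ω) (fun n => D n ω)
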